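/- arXiv:2202.12661 — 4 statements merged into one kernel-verified Lean document; each statement's English description precedes it below -/
import Mathlib

section
/- Let G be a simple graph on vertices x1,…,xn with edge ideal I(G) in the polynomial ring S = K[x1,…,xn], and let x_i x_j be an edge of G. Set L := N_G(x_i) ∩ N_G(x_j), and let G' be the graph with vertex set V(G) \ L and edge set E(G \ L) ∪ { x_p x_q : x_p ∈ N_{G\L}(x_i), x_q ∈ N_{G\L}(x_j) }. Then (I(G) : x_i) ∩ (I(G) : x_j) = I(G') + (L), where (L) is the ideal generated by the variables in L. -/
open MvPolynomial

/-- The closed neighborhood of a vertex. -/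
def closedNbhd {V : Type} (G : SimpleGraph V) (x : V) : Set V :=
  insert x (G.neighborSet x)

/-- A finite set of vertices is a star packing if the closed neighborhoods of its
elements (the vertex sets of the corresponding stars) are pairwise disjoint. -/
def IsStarPacking {V : Type} (G : SimpleGraph V) (s : Finset V) : Prop :=
  (s : Set V).Pairwise fun x y => Disjoint (closedNbhd G x) (closedNbhd G y)

/-- The star packing number `α₂(G)`: the maximum size of a star packing. -/
noncomputable def starPackingNumber {V : Type} (G : SimpleGraph V) : ℕ :=
  sSup {n | ∃ s : Finset V, IsStarPacking G s ∧ s.card = n}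

/-- The whiskered triangle `W(K₃)`: a triangle on vertices `0, 1, 2` with pendant
vertices `3, 4, 5` attached to them respectively. -/
def whiskeredTriangle : SimpleGraph (Fin 6) :=
  SimpleGraph.fromEdgeSet {s(0, 1), s(0, 2), s(1, 2), s(0, 3), s(1, 4), s(2, 5)}

/-- `G` is `W(K₃)`-free: no induced subgraph of `G` is isomorphic to the whiskered
triangle. -/
def WK3Free {V : Type} (G : SimpleGraph V) : Prop :=
  ¬ ∃ f : Fin 6 ↪ V, ∀ a b, whiskeredTriangle.Adj a b ↔ G.Adj (f a) (f b)

/-- The edge ideal of a graph `G`, in the polynomial ring `K[x_v : v ∈ V]`. -/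
noncomputable def edgeIdeal {V : Type} (K : Type) [Field K] (G : SimpleGraph V) :
    Ideal (MvPolynomial V K) :=
  Ideal.span {m | ∃ x y, G.Adj x y ∧ m = X x * X y}

/-- The graph `G'` of the lemma: vertex set `V(G) \ L` (vertices of `L` are isolated),
whose edges are the edges of `G \ L` together with all pairs `{p, q}` with
`p ∈ N_{G\L}(x_i)` and `q ∈ N_{G\L}(x_j)`. -/
def lemGraph {V : Type} (G : SimpleGraph V) (xi xj : V) (L : Set V) : SimpleGraph V :=
  SimpleGraph.fromRel fun p q =>
    (G.Adj p q ∧ p ∉ L ∧ q ∉ L) ∨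
    ((G.Adj xi p ∧ p ∉ L) ∧ (G.Adj xj q ∧ q ∉ L))

/-!
Both sides are monomial ideals, so it suffices to compare the monomials they contain. A monomial
`u` lies in `(I(G) : x)` iff `supp u ∪ {x}` is not independent in `G`, and in `I(G') + (L)` iff
`supp u` is not independent in `G'` or meets `L`. For a vertex set `T`, both "`T ∪ {x_i}` or
`T ∪ {x_j}` is independent in `G`" and "`T` is independent in `G'` and misses `L`" say that `T`
is independent in `G` and avoids `N(x_i)` or `N(x_j)`: a vertex adjacent to both lies in `L`.
-/

namespace SimpleGraph

variable {V : Type} {G : SimpleGraph V}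

theorem isIndepSet_insert_iff {a : V} {s : Set V} :
    G.IsIndepSet (insert a s) ↔ G.IsIndepSet s ∧ Disjoint s (G.neighborSet a) := by
  rw [IsIndepSet, Set.pairwise_insert, Set.disjoint_left]
  refine and_congr_right' ⟨fun h b hb hab => (h b hb hab.ne).1 hab, fun h b hb _ => ?_⟩
  exact ⟨h hb, fun hba => h hb hba.symm⟩

theorem isIndepSet_lemGraph_and_disjoint_iff {xi xj : V} {T : Set V} :
    (lemGraph G xi xj (G.neighborSet xi ∩ G.neighborSet xj)).IsIndepSet T ∧
        Disjoint T (G.neighborSet xi ∩ G.neighborSet xj) ↔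
      G.IsIndepSet (insert xi T) ∨ G.IsIndepSet (insert xj T) := by
  rw [isIndepSet_insert_iff, isIndepSet_insert_iff, ← and_or_left]
  simp only [IsIndepSet, Set.Pairwise, lemGraph, fromRel_adj, Set.disjoint_left,
    Set.mem_inter_iff, mem_neighborSet]
  constructor
  · rintro ⟨hT, hL⟩
    refine ⟨fun p hp q hq hpq hadj =>
      hT hp hq hpq ⟨hpq, .inl (.inl ⟨hadj, hL hp, hL hq⟩)⟩, ?_⟩
    by_contra! ⟨⟨p, hp, hip⟩, ⟨q, hq, hjq⟩⟩
    have hpL : ¬(G.Adj xi p ∧ G.Adj xj p) := hL hp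
    have hqL : ¬(G.Adj xi q ∧ G.Adj xj q) := hL hq
    have hpq : p ≠ q := by rintro rfl; exact hpL ⟨hip, hjq⟩
    exact hT hp hq hpq ⟨hpq, .inl (.inr ⟨⟨hip, hpL⟩, hjq, hqL⟩)⟩
  · rintro ⟨hT, hN⟩
    refine ⟨fun p hp q hq hpq hadj => ?_, fun p hp ⟨hip, hjp⟩ => ?_⟩
    · obtain ⟨-, hadj⟩ := hadj
      rcases hadj with (⟨hadj, -⟩ | ⟨⟨hip, -⟩, hjq, -⟩) |
        (⟨hadj, -⟩ | ⟨⟨hiq, -⟩, hjp, -⟩)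
      · exact hT hp hq hpq hadj
      · rcases hN with h | h
        · exact h hp hip
        · exact h hq hjq
      · exact hT hq hp hpq.symm hadj
      · rcases hN with h | h
        · exact h hq hiq
        · exact h hp hjp
    · rcases hN with h | h
      · exact h hp hip
      · exact h hp hjp

end SimpleGraph

theorem Finsupp.single_one_add_single_one_le_iff {V : Type} {x y : V} (hxy : x ≠ y)
    {m : V →₀ ℕ} :
    single x 1 + single y 1 ≤ m ↔ x ∈ m.support ∧ y ∈ m.support := by
  classical
  simp only [le_def, add_apply, single_apply, mem_support_iff]
  refine ⟨fun h => ⟨?_, ?_⟩, fun ⟨hx, hy⟩ v => ?_⟩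
  · have := h x; simp [hxy.symm] at this; omega
  · have := h y; simp [hxy] at this; omega
  · by_cases hvx : x = v <;> by_cases hvy : y = v <;> simp_all <;> omega

section EdgeIdeal

variable {V : Type} {K : Type} [Field K]

def edgeExponents (G : SimpleGraph V) : Set (V →₀ ℕ) :=
  {s | ∃ x y, G.Adj x y ∧ s = Finsupp.single x 1 + Finsupp.single y 1}

theorem exists_edgeExponents_le_iff {G : SimpleGraph V} {m : V →₀ ℕ} :
    (∃ s ∈ edgeExponents G, s ≤ m) ↔ ¬ G.IsIndepSet ↑m.support := by
  simp only [edgeExponents, SimpleGraph.IsIndepSet, Set.Pairwise, not_forall, not_not]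
  constructor
  · rintro ⟨_, ⟨x, y, hxy, rfl⟩, hle⟩
    obtain ⟨hx, hy⟩ := (Finsupp.single_one_add_single_one_le_iff hxy.ne).1 hle
    exact ⟨x, hx, y, hy, hxy.ne, hxy⟩
  · rintro ⟨x, hx, y, hy, hne, hxy⟩
    exact ⟨_, ⟨x, y, hxy, rfl⟩, (Finsupp.single_one_add_single_one_le_iff hne).2 ⟨hx, hy⟩⟩

theorem edgeIdeal_eq_span_monomial (G : SimpleGraph V) :
    edgeIdeal K G = Ideal.span ((fun s => monomial s (1 : K)) '' edgeExponents G) := by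
  have hX : ∀ x y : V, (X x * X y : MvPolynomial V K) =
      monomial (Finsupp.single x 1 + Finsupp.single y 1) 1 := by
    simp [X, monomial_mul]
  simp only [edgeIdeal, edgeExponents, hX]
  congr 1
  ext
  simp [eq_comm]

theorem mem_edgeIdeal_iff {G : SimpleGraph V} {f : MvPolynomial V K} :
    f ∈ edgeIdeal K G ↔ ∀ m ∈ f.support, ¬ G.IsIndepSet ↑m.support := by
  simp only [edgeIdeal_eq_span_monomial, mem_ideal_span_monomial_image,
    exists_edgeExponents_le_iff]

theorem mem_edgeIdeal_colon_X_iff {G : SimpleGraph V} {z : V} {f : MvPolynomial V K} :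
    f ∈ (edgeIdeal K G).colon ((Ideal.span {X z} : Ideal (MvPolynomial V K)) : Set _) ↔
      ∀ m ∈ f.support, ¬ G.IsIndepSet (insert z ↑m.support) := by
  classical
  rw [Ideal.mem_colon_span_singleton, mem_edgeIdeal_iff, support_mul_X, Finset.forall_mem_map]
  refine forall₂_congr fun m _ => ?_
  rw [addRightEmbedding_apply, Finsupp.support_add_eq_union,
    Finsupp.support_single _ one_ne_zero, Finset.union_singleton, Finset.coe_insert]

theorem mem_edgeIdeal_sup_span_X_iff {G : SimpleGraph V} {L : Set V} {f : MvPolynomial V K} :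
    f ∈ edgeIdeal K G ⊔ Ideal.span (X '' L) ↔
      ∀ m ∈ f.support, ¬ (G.IsIndepSet ↑m.support ∧ Disjoint ↑m.support L) := by
  have hL : (X '' L : Set (MvPolynomial V K)) =
      (fun s => monomial s 1) '' ((fun k => Finsupp.single k 1) '' L) := by
    rw [Set.image_image]; rfl
  rw [edgeIdeal_eq_span_monomial, hL, ← Ideal.span_union, ← Set.image_union,
    mem_ideal_span_monomial_image]
  refine forall₂_congr fun m _ => ?_
  simp only [Set.mem_union, or_and_right, exists_or, exists_edgeExponents_le_iff,
    Set.exists_mem_image, Finsupp.single_le_iff, not_and_or, Set.not_disjoint_iff]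
  simp [Nat.one_le_iff_ne_zero, and_comm]

end EdgeIdeal

theorem colon_intersection_eq_general {V : Type} (K : Type) [Field K]
    (G : SimpleGraph V) (xi xj : V) :
    (edgeIdeal K G).colon ((Ideal.span {X xi} : Ideal (MvPolynomial V K)) : Set (MvPolynomial V K)) ⊓ (edgeIdeal K G).colon ((Ideal.span {X xj} : Ideal (MvPolynomial V K)) : Set (MvPolynomial V K)) =
      edgeIdeal K (lemGraph G xi xj (G.neighborSet xi ∩ G.neighborSet xj)) +
        Ideal.span (X '' (G.neighborSet xi ∩ G.neighborSet xj)) := by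
  ext f
  rw [Submodule.mem_inf, mem_edgeIdeal_colon_X_iff, mem_edgeIdeal_colon_X_iff,
    Submodule.add_eq_sup, mem_edgeIdeal_sup_span_X_iff, ← forall₂_and]
  exact forall₂_congr fun m _ => by rw [SimpleGraph.isIndepSet_lemGraph_and_disjoint_iff, not_or]

/-- For an edge `x_i x_j` of `G`, with `L = N_G(x_i) ∩ N_G(x_j)` and `G'` the graph
described above, `(I(G) : x_i) ∩ (I(G) : x_j) = I(G') + (L)`. -/
theorem colon_intersection_eq {V : Type} (K : Type) [Field K]
    (G : SimpleGraph V) (xi xj : V) (hij : G.Adj xi xj) :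
    (edgeIdeal K G).colon ((Ideal.span {X xi} : Ideal (MvPolynomial V K)) : Set (MvPolynomial V K)) ⊓ (edgeIdeal K G).colon ((Ideal.span {X xj} : Ideal (MvPolynomial V K)) : Set (MvPolynomial V K)) =
      edgeIdeal K (lemGraph G xi xj (G.neighborSet xi ∩ G.neighborSet xj)) +
        Ideal.span (X '' (G.neighborSet xi ∩ G.neighborSet xj)) :=
  colon_intersection_eq_general K G xi xj
end

section
/- Let G be a simple graph with edge ideal I(G) ⊆ S = K[x1,…,xn] and let x_i x_j be an edge of G. Then (I(G) : x_i) + (I(G) : x_j) = I(G \ (N_G[x_i] ∪ N_G[x_j])) + (ideal generated by the variables in N_G(x_i) ∪ N_G(x_j)). -/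
open MvPolynomial

/-- The edge ideal of the induced subgraph `G \ U`, viewed inside the full polynomial
ring `K[x_v : v ∈ V]`: it is generated by the edges of `G` avoiding `U`. -/
noncomputable def edgeIdealDel {V : Type} (K : Type) [Field K] (G : SimpleGraph V)
    (U : Set V) : Ideal (MvPolynomial V K) :=
  Ideal.span {m | ∃ x y, G.Adj x y ∧ x ∉ U ∧ y ∉ U ∧ m = X x * X y}

/-!
Since `I(G)` is a monomial ideal, `I(G) : x = I(G \ N[x]) + (N(x))`: a monomial `u` with `u x ∈ I(G)`
is divisible either by a variable of `N(x)` or by an edge avoiding `N[x]`. Summing over `x_i` and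
`x_j`, an edge of `G \ N[x_i]` that meets `N[x_j]` meets it in `N(x_j)` (as `x_j ∈ N[x_i]`), so
its generator already lies in `(N(x_j))`.
-/

namespace MvPolynomial

variable {σ R : Type*} [CommSemiring R]

theorem mem_of_forall_monomial_mem {I : Ideal (MvPolynomial σ R)} {f : MvPolynomial σ R}
    (h : ∀ m ∈ f.support, monomial m 1 ∈ I) : f ∈ I := by
  rw [f.as_sum]
  refine Ideal.sum_mem _ fun m hm => ?_
  simpa only [C_mul_monomial, mul_one] using I.mul_mem_left (C (f.coeff m)) (h m hm)

theorem X_mul_X_eq_monomial (a b : σ) :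
    (X a * X b : MvPolynomial σ R) = monomial (Finsupp.single a 1 + Finsupp.single b 1) 1 := by
  rw [X, X, monomial_mul, mul_one]

end MvPolynomial

theorem Finsupp.single_add_single_le_iff {α : Type*} {a b : α} (hab : a ≠ b) {m : α →₀ ℕ} :
    single a 1 + single b 1 ≤ m ↔ m a ≠ 0 ∧ m b ≠ 0 := by
  classical
  refine ⟨fun h => ⟨?_, ?_⟩, fun ⟨ha, hb⟩ c => ?_⟩
  · have := h a
    simp only [Finsupp.add_apply, single_eq_same] at this
    omega
  · have := h b
    simp only [Finsupp.add_apply, single_eq_same] at this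
    omega
  · simp only [Finsupp.add_apply, single_apply]
    split_ifs <;> subst_vars <;> simp_all [Nat.one_le_iff_ne_zero]

section EdgeIdeal

variable {V : Type} {K : Type} [Field K] {G : SimpleGraph V}

theorem edgeIdealDel_empty : edgeIdealDel K G ∅ = edgeIdeal K G := by
  simp [edgeIdealDel, edgeIdeal]

theorem edgeIdealDel_eq_span_monomial (U : Set V) :
    edgeIdealDel K G U = Ideal.span ((fun s => monomial s (1 : K)) ''
      {s | ∃ a b, G.Adj a b ∧ a ∉ U ∧ b ∉ U ∧ s = Finsupp.single a 1 + Finsupp.single b 1}) := by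
  rw [edgeIdealDel]
  congr 1
  ext f
  simp only [Set.mem_image, X_mul_X_eq_monomial]
  grind

theorem mem_edgeIdealDel_iff {U : Set V} {f : MvPolynomial V K} :
    f ∈ edgeIdealDel K G U ↔
      ∀ m ∈ f.support, ∃ a b, G.Adj a b ∧ a ∉ U ∧ b ∉ U ∧ m a ≠ 0 ∧ m b ≠ 0 := by
  rw [edgeIdealDel_eq_span_monomial, mem_ideal_span_monomial_image]
  refine forall₂_congr fun m _ => ⟨?_, ?_⟩
  · rintro ⟨_, ⟨a, b, hab, ha, hb, rfl⟩, hle⟩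
    exact ⟨a, b, hab, ha, hb, (Finsupp.single_add_single_le_iff hab.ne).1 hle⟩
  · rintro ⟨a, b, hab, ha, hb, hma, hmb⟩
    exact ⟨_, ⟨a, b, hab, ha, hb, rfl⟩, (Finsupp.single_add_single_le_iff hab.ne).2 ⟨hma, hmb⟩⟩

theorem monomial_mem_edgeIdealDel {U : Set V} {a b : V} (hab : G.Adj a b) (ha : a ∉ U)
    (hb : b ∉ U) {m : V →₀ ℕ} (hma : m a ≠ 0) (hmb : m b ≠ 0) :
    monomial m (1 : K) ∈ edgeIdealDel K G U :=
  mem_edgeIdealDel_iff.2 fun m' hm' => by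
    rw [Finset.mem_singleton.1 (support_monomial_subset hm')]
    exact ⟨a, b, hab, ha, hb, hma, hmb⟩

theorem edgeIdealDel_anti {U W : Set V} (h : U ⊆ W) : edgeIdealDel K G W ≤ edgeIdealDel K G U :=
  Ideal.span_mono fun _ ⟨a, b, hab, ha, hb, he⟩ => ⟨a, b, hab, fun h' => ha (h h'),
    fun h' => hb (h h'), he⟩

theorem edgeIdealDel_le_sup (U W : Set V) :
    edgeIdealDel K G U ≤ edgeIdealDel K G (U ∪ W) ⊔ Ideal.span (X '' (W \ U)) := by
  rw [edgeIdealDel, Ideal.span_le]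
  rintro _ ⟨a, b, hab, ha, hb, rfl⟩
  by_cases haW : a ∈ W
  · exact Submodule.mem_sup_right (Ideal.mul_mem_right _ _ (Ideal.subset_span ⟨a, ⟨haW, ha⟩, rfl⟩))
  by_cases hbW : b ∈ W
  · exact Submodule.mem_sup_right (Ideal.mul_mem_left _ _ (Ideal.subset_span ⟨b, ⟨hbW, hb⟩, rfl⟩))
  exact Submodule.mem_sup_left
    (Ideal.subset_span ⟨a, b, hab, by simp [ha, haW], by simp [hb, hbW], rfl⟩)

theorem monomial_mem_span_X {N : Set V} {v : V} (hv : v ∈ N) {m : V →₀ ℕ} (hm : m v ≠ 0) :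
    monomial m (1 : K) ∈ Ideal.span (X '' N) :=
  mem_ideal_span_X_image.2 fun m' hm' => by
    rw [Finset.mem_singleton.1 (support_monomial_subset hm')]
    exact ⟨v, hv, hm⟩

theorem closedNbhd_diff_subset_neighborSet {x y : V} (h : G.Adj x y) :
    closedNbhd G y \ closedNbhd G x ⊆ G.neighborSet y := by
  rintro v ⟨rfl | hv, hvx⟩
  · exact absurd (Or.inr h) hvx
  · exact hv

theorem exists_neighbor_or_not_mem_closedNbhd {x a b : V} (hab : G.Adj a b) {m : V →₀ ℕ}
    (ha : (m + Finsupp.single x 1 : V →₀ ℕ) a ≠ 0)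
    (hb : (m + Finsupp.single x 1 : V →₀ ℕ) b ≠ 0) :
    (∃ v ∈ G.neighborSet x, m v ≠ 0) ∨
      (a ∉ closedNbhd G x ∧ b ∉ closedNbhd G x ∧ m a ≠ 0 ∧ m b ≠ 0) := by
  classical
  by_cases hxa : G.Adj x a
  · exact Or.inl ⟨a, hxa, by simpa [Finsupp.single_apply, hxa.ne] using ha⟩
  by_cases hxb : G.Adj x b
  · exact Or.inl ⟨b, hxb, by simpa [Finsupp.single_apply, hxb.ne] using hb⟩
  have hax : a ≠ x := fun h => hxb (h ▸ hab)
  have hbx : b ≠ x := fun h => hxa (h ▸ hab.symm)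
  refine Or.inr ⟨?_, ?_, ?_, ?_⟩
  · simp [closedNbhd, hax, hxa]
  · simp [closedNbhd, hbx, hxb]
  · simpa [Finsupp.single_apply, hax.symm] using ha
  · simpa [Finsupp.single_apply, hbx.symm] using hb

theorem edgeIdeal_colon_X (x : V) :
    (edgeIdeal K G).colon ((Ideal.span {X x} : Ideal (MvPolynomial V K)) : Set (MvPolynomial V K)) =
      edgeIdealDel K G (closedNbhd G x) + Ideal.span (X '' G.neighborSet x) := by
  apply le_antisymm
  · intro f hf
    rw [Ideal.mem_colon_span_singleton, ← edgeIdealDel_empty, mem_edgeIdealDel_iff] at hf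
    refine mem_of_forall_monomial_mem fun m hm => ?_
    obtain ⟨a, b, hab, -, -, ha, hb⟩ :=
      hf (m + Finsupp.single x 1) (by rw [support_mul_X]; exact Finset.mem_map_of_mem _ hm)
    rcases exists_neighbor_or_not_mem_closedNbhd hab ha hb with ⟨v, hv, hmv⟩ | ⟨ha', hb', hma, hmb⟩
    · exact Submodule.mem_sup_right (monomial_mem_span_X hv hmv)
    · exact Submodule.mem_sup_left (monomial_mem_edgeIdealDel hab ha' hb' hma hmb)
  · refine sup_le ?_ (Ideal.span_le.2 ?_)
    · rw [← edgeIdealDel_empty (K := K)]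
      exact (edgeIdealDel_anti (Set.empty_subset _)).trans Ideal.le_colon
    · rintro _ ⟨v, hv, rfl⟩
      exact Ideal.mem_colon_span_singleton.2 (Ideal.subset_span ⟨v, x, hv.symm, rfl⟩)

theorem edgeIdealDel_closedNbhd_le_sup {x y : V} (h : G.Adj x y) :
    edgeIdealDel K G (closedNbhd G x) ≤
      edgeIdealDel K G (closedNbhd G x ∪ closedNbhd G y) ⊔ Ideal.span (X '' G.neighborSet y) :=
  (edgeIdealDel_le_sup _ _).trans
    (sup_le_sup_left (Ideal.span_mono (Set.image_mono (closedNbhd_diff_subset_neighborSet h))) _)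

end EdgeIdeal

/-- For an edge `x_i x_j` of `G`, `(I(G) : x_i) + (I(G) : x_j)` equals
`I(G \ (N_G[x_i] ∪ N_G[x_j]))` plus the ideal generated by the variables in
`N_G(x_i) ∪ N_G(x_j)`. -/
theorem colon_sum_eq {V : Type} (K : Type) [Field K]
    (G : SimpleGraph V) (xi xj : V) (hij : G.Adj xi xj) :
    (edgeIdeal K G).colon ((Ideal.span {X xi} : Ideal (MvPolynomial V K)) : Set (MvPolynomial V K)) + (edgeIdeal K G).colon ((Ideal.span {X xj} : Ideal (MvPolynomial V K)) : Set (MvPolynomial V K)) =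
      edgeIdealDel K G (closedNbhd G xi ∪ closedNbhd G xj) +
        Ideal.span (X '' (G.neighborSet xi ∪ G.neighborSet xj)) := by
  have hi := edgeIdealDel_closedNbhd_le_sup (K := K) hij
  have hj := edgeIdealDel_closedNbhd_le_sup (K := K) hij.symm
  have hunion : edgeIdealDel K G (closedNbhd G xi ∪ closedNbhd G xj) ≤
      edgeIdealDel K G (closedNbhd G xi) :=
    edgeIdealDel_anti Set.subset_union_left
  rw [Set.union_comm] at hj
  simp only [edgeIdeal_colon_X, Set.image_union, Ideal.span_union, Submodule.add_eq_sup]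
  order
end

section
/- For a triangle-free simple graph G, the second ordinary power of the edge ideal equals the second symbolic power: I(G)^2 = I(G)^{(2)}. -/
open MvPolynomial

namespace SecondPowerAux

open scoped Classical Pointwise

variable {V : Type} {K : Type} [Field K]

/-- The exponent vector of the monomial `x_a x_b`. -/
noncomputable def ee (a b : V) : V →₀ ℕ := Finsupp.single a 1 + Finsupp.single b 1

lemma ee_apply (a b x : V) :
    ee a b x = (if a = x then 1 else 0) + (if b = x then 1 else 0) := by
  simp [ee, Finsupp.single_apply]

lemma X_mul_X (a b : V) : (X a * X b : MvPolynomial V K) = monomial (ee a b) 1 := by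
  rw [X, X, monomial_mul, one_mul, ee]

lemma one_le_of_ee_le {a b : V} {μ : V →₀ ℕ} (h : ee a b ≤ μ) : 1 ≤ μ a ∧ 1 ≤ μ b := by
  have ha := (Finsupp.le_def.mp h) a
  have hb := (Finsupp.le_def.mp h) b
  rw [ee_apply] at ha hb
  constructor
  · split_ifs at ha <;> simp_all <;> omega
  · split_ifs at hb <;> simp_all <;> omega

lemma two_le_of_ee_self_le {a : V} {μ : V →₀ ℕ} (h : ee a a ≤ μ) : 2 ≤ μ a := by
  have ha := (Finsupp.le_def.mp h) a
  rw [ee_apply] at ha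
  split_ifs at ha <;> simp_all <;> omega

lemma ee_add_ee_le_four {a b c d : V} {μ : V →₀ ℕ} (hab : a ≠ b) (hcd : c ≠ d)
    (hac : a ≠ c) (had : a ≠ d) (hbc : b ≠ c) (hbd : b ≠ d)
    (ha : 1 ≤ μ a) (hb : 1 ≤ μ b) (hc : 1 ≤ μ c) (hd : 1 ≤ μ d) :
    ee a b + ee c d ≤ μ := by
  rw [Finsupp.le_def]
  intro x
  rw [Finsupp.add_apply, ee_apply, ee_apply]
  split_ifs <;> subst_vars <;> simp_all <;> omega

lemma ee_add_ee_le_star {z w w' : V} {μ : V →₀ ℕ} (h1 : z ≠ w) (h2 : z ≠ w')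
    (hne : w ≠ w') (hz : 2 ≤ μ z) (hw : 1 ≤ μ w) (hw' : 1 ≤ μ w') :
    ee z w + ee z w' ≤ μ := by
  rw [Finsupp.le_def]
  intro x
  rw [Finsupp.add_apply, ee_apply, ee_apply]
  split_ifs <;> subst_vars <;> simp_all <;> omega

lemma ee_add_ee_le_double {z w : V} {μ : V →₀ ℕ} (h1 : z ≠ w)
    (hz : 2 ≤ μ z) (hw : 2 ≤ μ w) : ee z w + ee z w ≤ μ := by
  rw [Finsupp.le_def]
  intro x
  rw [Finsupp.add_apply, ee_apply]
  split_ifs <;> subst_vars <;> simp_all <;> omega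

/-- The key combinatorial lemma. -/
lemma key_comb {V : Type} (G : SimpleGraph V) (hfree : G.CliqueFree 3) (μ : V →₀ ℕ)
    (H : ∀ S : Set V, (∀ a ∈ S, ∀ b ∈ S, ¬ G.Adj a b) →
      ∃ u, u ∉ S ∧ ∃ v, v ∉ S ∧ ee u v ≤ μ) :
    ∃ a b c d, G.Adj a b ∧ G.Adj c d ∧ ee a b + ee c d ≤ μ := by
  by_contra hcon
  push_neg at hcon
  have no_tri : ∀ a b c : V, G.Adj a b → G.Adj a c → G.Adj b c → False := by
    intro a b c h1 h2 h3
    exact hfree {a, b, c} (SimpleGraph.is3Clique_triple_iff.mpr ⟨h1, h2, h3⟩)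
  -- Step 1: there is an edge inside the support of μ
  have h1 : ∃ a b, G.Adj a b ∧ 1 ≤ μ a ∧ 1 ≤ μ b := by
    by_contra h
    push_neg at h
    obtain ⟨u, hu, v, hv, hle⟩ := H {x | 1 ≤ μ x}
      (fun a ha b hb hadj => absurd hb (not_le.mpr (h a b hadj ha)))
    exact hu (one_le_of_ee_le hle).1
  -- any two edges inside the support intersect
  have hint : ∀ a b c d, G.Adj a b → G.Adj c d → 1 ≤ μ a → 1 ≤ μ b → 1 ≤ μ c →
      1 ≤ μ d → a = c ∨ a = d ∨ b = c ∨ b = d := by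
    intro a b c d hab hcd ha hb hc hd
    by_contra h
    push_neg at h
    obtain ⟨hac, had, hbc, hbd⟩ := h
    exact hcon a b c d hab hcd
      (ee_add_ee_le_four hab.ne hcd.ne hac had hbc hbd ha hb hc hd)
  -- star center
  obtain ⟨a, b, hab, ha1, hb1⟩ := h1
  have hstar : ∃ z, 1 ≤ μ z ∧ (∃ w, G.Adj z w ∧ 1 ≤ μ w) ∧
      ∀ c d, G.Adj c d → 1 ≤ μ c → 1 ≤ μ d → c = z ∨ d = z := by
    by_cases hA : ∀ c d, G.Adj c d → 1 ≤ μ c → 1 ≤ μ d → c = a ∨ d = a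
    · exact ⟨a, ha1, ⟨b, hab, hb1⟩, hA⟩
    · push_neg at hA
      obtain ⟨c, d, hcd, hc1, hd1, hca, hda⟩ := hA
      -- edge cd must meet {a, b}, so it contains b
      have hmeet := hint a b c d hab hcd ha1 hb1 hc1 hd1
      have hbc' : ∃ c', G.Adj b c' ∧ 1 ≤ μ c' ∧ c' ≠ a := by
        rcases hmeet with h | h | h | h
        · exact absurd h.symm hca
        · exact absurd h.symm hda
        · exact ⟨d, h ▸ hcd, hd1, hda⟩
        · exact ⟨c, h ▸ hcd.symm, hc1, hca⟩
      obtain ⟨c', hbc, hc'1, hc'a⟩ := hbc'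
      refine ⟨b, hb1, ⟨c', hbc, hc'1⟩, ?_⟩
      intro u v huv hu1 hv1
      by_contra h
      push_neg at h
      obtain ⟨hub, hvb⟩ := h
      have m1 := hint a b u v hab huv ha1 hb1 hu1 hv1
      have m2 := hint b c' u v hbc huv hb1 hc'1 hu1 hv1
      have hau : a = u ∨ a = v := by
        rcases m1 with h | h | h | h
        · exact Or.inl h
        · exact Or.inr h
        · exact absurd h.symm hub
        · exact absurd h.symm hvb
      have hcu : c' = u ∨ c' = v := by
        rcases m2 with h | h | h | h
        · exact absurd h.symm hub
        · exact absurd h.symm hvb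
        · exact Or.inl h
        · exact Or.inr h
      have hac' : G.Adj a c' := by
        rcases hau with h | h <;> rcases hcu with h' | h'
        · exact absurd (h'.trans h.symm) hc'a
        · subst h; subst h'; exact huv
        · subst h; subst h'; exact huv.symm
        · exact absurd (h'.trans h.symm) hc'a
      exact no_tri a b c' hab hac' hbc
  obtain ⟨z, hz1, ⟨w, hzw, hw1⟩, hstar⟩ := hstar
  -- μ z ≥ 2
  have hz2 : 2 ≤ μ z := by
    have hind : ∀ x ∈ {x | 1 ≤ μ x ∧ x ≠ z}, ∀ y ∈ {x | 1 ≤ μ x ∧ x ≠ z}, ¬ G.Adj x y := by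
      rintro x ⟨hx1, hxz⟩ y ⟨hy1, hyz⟩ hadj
      rcases hstar x y hadj hx1 hy1 with h | h
      · exact hxz h
      · exact hyz h
    obtain ⟨u, hu, v, hv, hle⟩ := H {x | 1 ≤ μ x ∧ x ≠ z} hind
    obtain ⟨hu1, hv1⟩ := one_le_of_ee_le hle
    have huz : u = z := by
      by_contra h; exact hu ⟨hu1, h⟩
    have hvz : v = z := by
      by_contra h; exact hv ⟨hv1, h⟩
    rw [huz, hvz] at hle
    exact two_le_of_ee_self_le hle
  -- case: two distinct support-neighbors of z
  by_cases hB : ∃ w', G.Adj z w' ∧ 1 ≤ μ w' ∧ w' ≠ w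
  · obtain ⟨w', hzw', hw'1, hww'⟩ := hB
    exact hcon z w z w' hzw hzw'
      (ee_add_ee_le_star hzw.ne hzw'.ne (Ne.symm hww') hz2 hw1 hw'1)
  · -- w is the unique support-neighbor of z; derive μ w ≥ 2
    push_neg at hB
    have hw2 : 2 ≤ μ w := by
      have hind : ∀ x ∈ {x | 1 ≤ μ x ∧ x ≠ w}, ∀ y ∈ {x | 1 ≤ μ x ∧ x ≠ w}, ¬ G.Adj x y := by
        rintro x ⟨hx1, hxw⟩ y ⟨hy1, hyw⟩ hadj
        rcases hstar x y hadj hx1 hy1 with h | h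
        · subst h
          exact hyw (hB y hadj hy1)
        · subst h
          exact hxw (hB x hadj.symm hx1)
      obtain ⟨u, hu, v, hv, hle⟩ := H {x | 1 ≤ μ x ∧ x ≠ w} hind
      obtain ⟨hu1, hv1⟩ := one_le_of_ee_le hle
      have huw : u = w := by
        by_contra h; exact hu ⟨hu1, h⟩
      have hvw : v = w := by
        by_contra h; exact hv ⟨hv1, h⟩
      rw [huw, hvw] at hle
      exact two_le_of_ee_self_le hle
    exact hcon z w z w hzw hzw (ee_add_ee_le_double hzw.ne hz2 hw2)

/-- The edge ideal as a span of monomials. -/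
lemma edgeIdeal_eq (G : SimpleGraph V) :
    edgeIdeal K G = Ideal.span
      ((fun s => monomial s (1 : K)) '' {s | ∃ a b, G.Adj a b ∧ s = ee a b}) := by
  unfold edgeIdeal
  congr 1
  ext m
  constructor
  · rintro ⟨a, b, hab, rfl⟩
    exact ⟨ee a b, ⟨a, b, hab, rfl⟩, (X_mul_X a b).symm⟩
  · rintro ⟨s, ⟨a, b, hab, rfl⟩, rfl⟩
    exact ⟨a, b, hab, (X_mul_X a b).symm⟩

lemma mem_edgeIdeal_sq_iff (G : SimpleGraph V) (p : MvPolynomial V K) :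
    p ∈ edgeIdeal K G ^ 2 ↔
      ∀ μ ∈ p.support, ∃ a b c d, G.Adj a b ∧ G.Adj c d ∧ ee a b + ee c d ≤ μ := by
  have himg : ((fun s => monomial s (1 : K)) '' {s | ∃ a b, G.Adj a b ∧ s = ee a b}) *
      ((fun s => monomial s (1 : K)) '' {s | ∃ a b, G.Adj a b ∧ s = ee a b}) =
      (fun s => monomial s (1 : K)) ''
        {s | ∃ a b c d, G.Adj a b ∧ G.Adj c d ∧ s = ee a b + ee c d} := by
    ext m
    constructor
    · rintro ⟨x, ⟨s, ⟨a, b, hab, rfl⟩, rfl⟩, y, ⟨t, ⟨c, d, hcd, rfl⟩, rfl⟩, rfl⟩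
      exact ⟨ee a b + ee c d, ⟨a, b, c, d, hab, hcd, rfl⟩, by simp [monomial_mul, ee]⟩
    · rintro ⟨s, ⟨a, b, c, d, hab, hcd, rfl⟩, rfl⟩
      exact ⟨monomial (ee a b) 1, ⟨ee a b, ⟨a, b, hab, rfl⟩, rfl⟩,
        monomial (ee c d) 1, ⟨ee c d, ⟨c, d, hcd, rfl⟩, rfl⟩,
        by simp [monomial_mul, ee]⟩
  rw [pow_two, edgeIdeal_eq, Ideal.span_mul_span', himg, mem_ideal_span_monomial_image]
  constructor
  · intro h μ hμ
    obtain ⟨s, ⟨a, b, c, d, hab, hcd, rfl⟩, hle⟩ := h μ hμ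
    exact ⟨a, b, c, d, hab, hcd, hle⟩
  · intro h μ hμ
    obtain ⟨a, b, c, d, hab, hcd, hle⟩ := h μ hμ
    exact ⟨ee a b + ee c d, ⟨a, b, c, d, hab, hcd, rfl⟩, hle⟩

/-- For a set of vertices `C`, the prime ideal generated by the corresponding variables. -/
noncomputable def cutIdeal (K : Type) [Field K] (C : Set V) : Ideal (MvPolynomial V K) :=
  Ideal.span (X '' C)

lemma cutIdeal_eq_ker (C : Set V) [DecidablePred (· ∈ C)] :
    cutIdeal K C = RingHom.ker (aeval fun v =>
      if v ∈ C then (0 : MvPolynomial V K) else X v) := by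
  set g : V → MvPolynomial V K := fun v => if v ∈ C then 0 else X v with hg
  apply le_antisymm
  · rw [cutIdeal, Ideal.span_le]
    rintro m ⟨v, hv, rfl⟩
    simp [RingHom.mem_ker, hg, hv]
  · intro p hp
    rw [RingHom.mem_ker] at hp
    have key : ∀ q : MvPolynomial V K, q - aeval g q ∈ cutIdeal K C := by
      intro q
      induction q using MvPolynomial.induction_on with
      | C a => simp [aeval_C, algebraMap_eq]
      | add p q hp hq =>
        have : p + q - aeval g (p + q) = (p - aeval g p) + (q - aeval g q) := by
          rw [map_add]; ring
        rw [this]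
        exact add_mem hp hq
      | mul_X p v hpv =>
        rw [map_mul, aeval_X]
        by_cases hv : v ∈ C
        · rw [show g v = 0 from if_pos hv, mul_zero, sub_zero]
          exact Ideal.mul_mem_left _ p (Ideal.subset_span ⟨v, hv, rfl⟩)
        · rw [show g v = X v from if_neg hv]
          have heq : p * X v - aeval g p * X v = (p - aeval g p) * X v := by ring
          rw [heq]
          exact Ideal.mul_mem_right _ _ hpv
    have := key p
    rwa [hp, sub_zero] at this

lemma cutIdeal_isPrime (C : Set V) : (cutIdeal K C : Ideal (MvPolynomial V K)).IsPrime := by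
  classical
  rw [cutIdeal_eq_ker]
  exact RingHom.ker_isPrime _

lemma edgeIdeal_le_cutIdeal (G : SimpleGraph V) (C : Set V)
    (hC : ∀ a b, G.Adj a b → a ∈ C ∨ b ∈ C) : edgeIdeal K G ≤ cutIdeal K C := by
  rw [edgeIdeal, Ideal.span_le]
  rintro m ⟨a, b, hab, rfl⟩
  rcases hC a b hab with h | h
  · exact Ideal.mul_mem_right _ _ (Ideal.subset_span ⟨a, h, rfl⟩)
  · exact Ideal.mul_mem_left _ _ (Ideal.subset_span ⟨b, h, rfl⟩)

lemma mem_cutIdeal_sq_iff (C : Set V) (p : MvPolynomial V K) :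
    p ∈ cutIdeal K C ^ 2 ↔
      ∀ μ ∈ p.support, ∃ u ∈ C, ∃ v ∈ C, ee u v ≤ μ := by
  have hX : (X '' C : Set (MvPolynomial V K)) =
      (fun s => monomial s (1 : K)) '' ((fun v => Finsupp.single v 1) '' C) := by
    rw [Set.image_image]
    rfl
  have himg : ((fun s => monomial s (1 : K)) '' ((fun v => Finsupp.single v 1) '' C)) *
      ((fun s => monomial s (1 : K)) '' ((fun v => Finsupp.single v 1) '' C)) =
      (fun s => monomial s (1 : K)) '' {s | ∃ u ∈ C, ∃ v ∈ C, s = ee u v} := by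
    ext m
    constructor
    · rintro ⟨x, ⟨s, ⟨u, hu, rfl⟩, rfl⟩, y, ⟨t, ⟨v, hv, rfl⟩, rfl⟩, rfl⟩
      exact ⟨ee u v, ⟨u, hu, v, hv, rfl⟩, by simp [monomial_mul, ee]⟩
    · rintro ⟨s, ⟨u, hu, v, hv, rfl⟩, rfl⟩
      exact ⟨monomial (Finsupp.single u 1) 1, ⟨Finsupp.single u 1, ⟨u, hu, rfl⟩, rfl⟩,
        monomial (Finsupp.single v 1) 1, ⟨Finsupp.single v 1, ⟨v, hv, rfl⟩, rfl⟩,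
        by simp [monomial_mul, ee]⟩
  rw [pow_two, cutIdeal, hX, Ideal.span_mul_span', himg, mem_ideal_span_monomial_image]
  constructor
  · intro h μ hμ
    obtain ⟨s, ⟨u, hu, v, hv, rfl⟩, hle⟩ := h μ hμ
    exact ⟨u, hu, v, hv, hle⟩
  · intro h μ hμ
    obtain ⟨u, hu, v, hv, hle⟩ := h μ hμ
    exact ⟨ee u v, ⟨u, hu, v, hv, rfl⟩, hle⟩

end SecondPowerAux

/-- For a triangle-free graph `G`, the second ordinary power of the edge ideal equals
its second symbolic power `⋂_{P minimal prime of I(G)} P²`. -/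
theorem second_power_eq_second_symbolic_of_triangleFree {V : Type} (K : Type) [Field K]
    (G : SimpleGraph V) (hfree : G.CliqueFree 3) :
    edgeIdeal K G ^ 2 = ⨅ P ∈ (edgeIdeal K G).minimalPrimes, P ^ 2 := by
  classical
  apply le_antisymm
  · refine le_iInf fun P => le_iInf fun hP => ?_
    have hle : edgeIdeal K G ≤ P := hP.1.2
    rw [pow_two, pow_two]
    exact Ideal.mul_mono hle hle
  · intro f hf
    simp only [Submodule.mem_iInf] at hf
    rw [SecondPowerAux.mem_edgeIdeal_sq_iff]
    intro μ hμ
    refine SecondPowerAux.key_comb G hfree μ ?_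
    intro S hS
    have hcover : ∀ a b, G.Adj a b → a ∈ Sᶜ ∨ b ∈ Sᶜ := by
      intro a b hab
      by_contra h
      push_neg at h
      simp only [Set.notMem_compl_iff] at h
      exact hS a h.1 b h.2 hab
    have hIP : edgeIdeal K G ≤ SecondPowerAux.cutIdeal K Sᶜ :=
      SecondPowerAux.edgeIdeal_le_cutIdeal G Sᶜ hcover
    haveI := SecondPowerAux.cutIdeal_isPrime (K := K) Sᶜ
    obtain ⟨Q, hQ, hQle⟩ := Ideal.exists_minimalPrimes_le hIP
    have hfQ : f ∈ Q ^ 2 := hf Q hQ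
    have hsub : Q ^ 2 ≤ SecondPowerAux.cutIdeal K Sᶜ ^ 2 := by
      rw [pow_two, pow_two]
      exact Ideal.mul_mono hQle hQle
    have hfP : f ∈ SecondPowerAux.cutIdeal K Sᶜ ^ 2 := hsub hfQ
    obtain ⟨u, hu, v, hv, hle⟩ :=
      (SecondPowerAux.mem_cutIdeal_sq_iff Sᶜ f).mp hfP μ hμ
    exact ⟨u, hu, v, hv, hle⟩
end

section
/- Let G be the whiskered triangle W(K_3) (triangle with vertices x1,x2,x3 and pendant vertices y1,y2,y3 attached to them respectively), with edge ideal I(G) ⊆ S = K[x1,x2,x3,y1,y2,y3]. Then depth_S I(G)^2 = 1 and α₂(G) = 3, so depth_S I(G)^2 = α₂(G) − 2, showing the bound depth I(G)^2 ≥ α₂(G) − 2 is sharp. -/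
/-!
The squarefree cubic `f = x₁x₂x₃` is a socle element of `S/I(G)²`: multiplying it by any
variable gives a product of two edges (`x₁·f = x₁x₂·x₁x₃`, `y₁·f = x₁y₁·x₂x₃`, …), while `f`
itself is not in `I(G)² ⊆ 𝔪⁴` for degree reasons, `𝔪` being the ideal of the variables.
A nonzero element killed by `𝔪` forbids any `𝔪`-regular element, so `depth S/I(G)² = 0`.

The stars at the leaves `y₁, y₂, y₃` are disjoint, and the star at a triangle vertex meets every
other star, so no packing of more than one star uses a triangle vertex; hence `α₂(G) = 3`.
-/

open MvPolynomial

/-- The depth of `S ⧸ J` with respect to the irrelevant maximal ideal `(x_v : v ∈ V)`: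
the supremum of lengths of regular sequences on `S ⧸ J` consisting of elements of the
irrelevant maximal ideal.  The depth of the ideal `J` itself (as a module) is, by the
usual convention for proper ideals, `quotDepth K J + 1`. -/
noncomputable def quotDepth {V : Type} (K : Type) [Field K]
    (J : Ideal (MvPolynomial V K)) : ℕ :=
  sSup {n | ∃ rs : List (MvPolynomial V K), rs.length = n ∧
    (∀ r ∈ rs, r ∈ Ideal.span (Set.range (X (R := K) (σ := V)))) ∧
    RingTheory.Sequence.IsRegular (MvPolynomial V K ⧸ J) rs}

namespace RingTheory.Sequence

theorem IsWeaklyRegular.eq_nil_of_smul_eq_zero {R M : Type*} [CommRing R] [AddCommGroup M]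
    [Module R M] {I : Ideal R} {x : M} (hx : x ≠ 0) (hI : ∀ r ∈ I, r • x = 0)
    {rs : List R} (hrs : ∀ r ∈ rs, r ∈ I) (hreg : IsWeaklyRegular M rs) : rs = [] := by
  cases rs with
  | nil => rfl
  | cons r rs =>
    have hr : IsSMulRegular M r := ((isWeaklyRegular_cons_iff M r rs).mp hreg).1
    exact absurd (hr.right_eq_zero_of_smul (hI r (hrs r List.mem_cons_self))) hx

end RingTheory.Sequence

section Depth

variable {V K : Type} [Field K]

theorem mul_mem_of_forall_X_mul_mem {J : Ideal (MvPolynomial V K)} {f : MvPolynomial V K}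
    (hf : ∀ v, X v * f ∈ J) {r : MvPolynomial V K} (hr : r ∈ idealOfVars V K) : r * f ∈ J := by
  have hcolon : idealOfVars V K ≤ J.colon (Ideal.span {f}) :=
    Ideal.span_le.mpr fun _ ⟨v, hv⟩ => Submodule.mem_colon_span_singleton.mpr (hv ▸ hf v)
  exact Submodule.mem_colon_span_singleton.mp (hcolon hr)

theorem quotDepth_eq_zero_of_forall_X_mul_mem {J : Ideal (MvPolynomial V K)}
    {f : MvPolynomial V K} (hfJ : f ∉ J) (hf : ∀ v, X v * f ∈ J) : quotDepth K J = 0 := by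
  refine Nat.eq_zero_of_le_zero (csSup_le' ?_)
  rintro n ⟨rs, rfl, hrs, hreg⟩
  have hnil : rs = [] := by
    refine hreg.toIsWeaklyRegular.eq_nil_of_smul_eq_zero (x := Ideal.Quotient.mk J f)
      (I := idealOfVars V K) ?_ ?_ hrs
    · rwa [ne_eq, Ideal.Quotient.eq_zero_iff_mem]
    · intro r hr
      exact Ideal.Quotient.eq_zero_iff_mem.mpr (mul_mem_of_forall_X_mul_mem hf hr)
  simp [hnil]

end Depth

section EdgeIdeal

variable {V K : Type} [Field K] {G : SimpleGraph V}

theorem edgeIdeal_le_idealOfVars_sq : edgeIdeal K G ≤ idealOfVars V K ^ 2 := by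
  rw [edgeIdeal, Ideal.span_le]
  rintro _ ⟨x, y, -, rfl⟩
  rw [pow_two]
  exact Ideal.mul_mem_mul (Ideal.subset_span ⟨x, rfl⟩) (Ideal.subset_span ⟨y, rfl⟩)

theorem X_mul_X_mul_X_notMem_edgeIdeal_sq (a b c : V) :
    X a * X b * X c ∉ edgeIdeal K G ^ 2 := by
  intro h
  have h4 : X a * X b * X c ∈ idealOfVars V K ^ 4 := by
    rw [show 4 = 2 * 2 from rfl, pow_mul]
    exact Ideal.pow_right_mono edgeIdeal_le_idealOfVars_sq 2 h
  rw [X, X, X, monomial_mul, monomial_mul, one_mul, one_mul,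
    monomial_mem_pow_idealOfVars_iff _ _ one_ne_zero] at h4
  simp at h4

theorem X_mul_X_mul_X_mul_X_mem_edgeIdeal_sq {a b c d : V} (hab : G.Adj a b)
    (hcd : G.Adj c d) : X a * X b * (X c * X d) ∈ edgeIdeal K G ^ 2 := by
  rw [pow_two]
  exact Ideal.mul_mem_mul (Ideal.subset_span ⟨a, b, hab, rfl⟩)
    (Ideal.subset_span ⟨c, d, hcd, rfl⟩)

end EdgeIdeal

section StarPacking

variable {V : Type} {G : SimpleGraph V}

theorem disjoint_closedNbhd_iff {x y : V} :
    Disjoint (closedNbhd G x) (closedNbhd G y) ↔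
      ∀ z, ¬((z = x ∨ G.Adj x z) ∧ (z = y ∨ G.Adj y z)) := by
  simp only [Set.disjoint_left, not_and]
  rfl

theorem IsStarPacking.card_le {s L : Finset V} (hs : IsStarPacking G s)
    (hL : ∀ a ∉ L, ∀ b, ¬Disjoint (closedNbhd G a) (closedNbhd G b)) :
    s.card ≤ max 1 L.card := by
  by_cases hsL : s ⊆ L
  · exact (Finset.card_le_card hsL).trans (le_max_right _ _)
  obtain ⟨a, has, haL⟩ := Finset.not_subset.mp hsL
  have hsa : s ⊆ {a} := fun b hbs => by
    by_contra hba
    exact hL a haL b (hs has hbs (Ne.symm (Finset.mem_singleton.not.mp hba)))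
  exact (Finset.card_le_card hsa).trans (by simp)

theorem starPackingNumber_eq {s : Finset V} (hs : IsStarPacking G s)
    (hmax : ∀ t, IsStarPacking G t → t.card ≤ s.card) : starPackingNumber G = s.card := by
  have hub : s.card ∈ upperBounds {n | ∃ t, IsStarPacking G t ∧ t.card = n} := by
    rintro _ ⟨t, ht, rfl⟩
    exact hmax t ht
  exact le_antisymm (csSup_le' hub) (le_csSup ⟨_, hub⟩ ⟨s, hs, rfl⟩)

end StarPacking

theorem whiskeredTriangle_adj {a b : Fin 6} : whiskeredTriangle.Adj a b ↔
    s(a, b) ∈ ({s(0, 1), s(0, 2), s(1, 2), s(0, 3), s(1, 4), s(2, 5)} : Finset (Sym2 (Fin 6))) ∧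
      a ≠ b := by
  rw [whiskeredTriangle, SimpleGraph.fromEdgeSet_adj, ← Finset.mem_coe]
  simp

instance : DecidableRel whiskeredTriangle.Adj :=
  fun _ _ => decidable_of_iff _ whiskeredTriangle_adj.symm

theorem X_mul_triangle_mem_edgeIdeal_sq {K : Type} [Field K] (v : Fin 6) :
    X v * (X 0 * X 1 * X 2) ∈ edgeIdeal K whiskeredTriangle ^ 2 := by
  have edges {a b c d : Fin 6} (hab : whiskeredTriangle.Adj a b)
      (hcd : whiskeredTriangle.Adj c d) {p : MvPolynomial (Fin 6) K}
      (hp : p = X a * X b * (X c * X d)) : p ∈ edgeIdeal K whiskeredTriangle ^ 2 :=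
    hp ▸ X_mul_X_mul_X_mul_X_mem_edgeIdeal_sq hab hcd
  fin_cases v <;> simp only [Fin.reduceFinMk, Fin.isValue]
  · exact edges (a := 0) (b := 1) (c := 0) (d := 2) (by decide) (by decide) (by ring)
  · exact edges (a := 0) (b := 1) (c := 1) (d := 2) (by decide) (by decide) (by ring)
  · exact edges (a := 0) (b := 2) (c := 1) (d := 2) (by decide) (by decide) (by ring)
  · exact edges (a := 3) (b := 0) (c := 1) (d := 2) (by decide) (by decide) (by ring)
  · exact edges (a := 4) (b := 1) (c := 0) (d := 2) (by decide) (by decide) (by ring)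
  · exact edges (a := 5) (b := 2) (c := 0) (d := 1) (by decide) (by decide) (by ring)

theorem starPackingNumber_whiskeredTriangle : starPackingNumber whiskeredTriangle = 3 := by
  have hleaves : IsStarPacking whiskeredTriangle {3, 4, 5} := by
    intro x hx y hy hxy
    rw [disjoint_closedNbhd_iff]
    revert x y
    decide
  have htriangle : ∀ a ∉ ({3, 4, 5} : Finset (Fin 6)), ∀ b,
      ¬Disjoint (closedNbhd whiskeredTriangle a) (closedNbhd whiskeredTriangle b) := by
    simp only [disjoint_closedNbhd_iff, not_forall, not_not]
    decide
  exact starPackingNumber_eq hleaves fun t ht => ht.card_le htriangle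

/-- For the whiskered triangle `G = W(K₃)`, one has `depth_S I(G)² = 1` (with the
convention `depth_S I(G)² = depth_S(S/I(G)²) + 1`) and `α₂(G) = 3`; in particular
`depth_S I(G)² = α₂(G) - 2`, so the bound `depth I(G)² ≥ α₂(G) - 2` is sharp. -/
theorem depth_sharp_whiskered_triangle (K : Type) [Field K] :
    quotDepth K (edgeIdeal K whiskeredTriangle ^ 2) + 1 = 1 ∧
    starPackingNumber whiskeredTriangle = 3 ∧
    quotDepth K (edgeIdeal K whiskeredTriangle ^ 2) + 1 =
      starPackingNumber whiskeredTriangle - 2 := by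
  have hdepth : quotDepth K (edgeIdeal K whiskeredTriangle ^ 2) = 0 :=
    quotDepth_eq_zero_of_forall_X_mul_mem (X_mul_X_mul_X_notMem_edgeIdeal_sq 0 1 2)
      X_mul_triangle_mem_edgeIdeal_sq
  rw [hdepth, starPackingNumber_whiskeredTriangle]
  exact ⟨rfl, rfl, rfl⟩
end
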